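/- arXiv:0807.4229 — 2 statements merged into one kernel-verified Lean document; each statement's English description precedes it below -/
import Mathlib

section
/- Let X = ∏_{i=1}^n X_i be a product of n finite intervals of integers, each of cardinality at least 2, and let F be a map from X to itself. If for every (x,v) ∈ X' the local interaction graph 𝐆_F(x,v) has no positive circuit, then F has at most one fixed point. -/
/-! Common definitions for discrete dynamical systems on products of
integer intervals, following Richard, "Positive circuits and maximal
number of fixed points in discrete dynamical systems". -/

/-- The state space `X = ∏ i, [a i, b i]` as a subset of `Fin n → ℤ`. -/
def StateSpace {n : ℕ} (a b : Fin n → ℤ) : Set (Fin n → ℤ) :=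
  {x | ∀ i, a i ≤ x i ∧ x i ≤ b i}

/-- `v` is a directional vector, i.e. `v ∈ {-1,1}^n`. -/
def IsDir {n : ℕ} (v : Fin n → ℤ) : Prop := ∀ i, v i = 1 ∨ v i = -1

/-- `(x, v) ∈ X'`: `x ∈ X`, `v ∈ {-1,1}^n` and `x + v ∈ X`. -/
def InX' {n : ℕ} (a b : Fin n → ℤ) (x v : Fin n → ℤ) : Prop :=
  x ∈ StateSpace a b ∧ IsDir v ∧ (x + v) ∈ StateSpace a b

/-- Discrete Jacobian entry `f_ij(x,v) = (f_i(x + v_j e_j) - f_i(x)) / v_j`. -/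
def jac {n : ℕ} (F : (Fin n → ℤ) → Fin n → ℤ) (x v : Fin n → ℤ) (i j : Fin n) : ℤ :=
  (F (Function.update x j (x j + v j)) i - F x i) / v j

/-- A signed edge `(j, s, i)`: initial vertex `j`, sign `s`, final vertex `i`. -/
abbrev SEdge (n : ℕ) := Fin n × ℤ × Fin n

/-- Edge set of the local interaction graph `𝐆_F(x,v)`: a positive
(resp. negative) edge from `j` to `i` iff `f_ij(x,v) > 0` (resp. `< 0`). -/
def localGraph {n : ℕ} (F : (Fin n → ℤ) → Fin n → ℤ) (x v : Fin n → ℤ) :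
    Set (SEdge n) :=
  {e | (e.2.1 = 1 ∧ 0 < jac F x v e.2.2 e.1) ∨ (e.2.1 = -1 ∧ jac F x v e.2.2 e.1 < 0)}

/-- `p` and `q` are on both sides of `t`. -/
def BothSides (p q t : ℚ) : Prop := (p < t ∧ t < q) ∨ (q < t ∧ t < p)

/-- Edge set of the local interaction graph with thresholds `G_F(x,v)`:
an edge `(j,s,i)` of `𝐆_F(x,v)` such that moreover `f_i(x)` and
`f_i(x + v_j e_j)` are on both sides of the threshold `x_i + v_i / 2`. -/
def localGraphT {n : ℕ} (F : (Fin n → ℤ) → Fin n → ℤ) (x v : Fin n → ℤ) :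
    Set (SEdge n) :=
  {e | e ∈ localGraph F x v ∧
    BothSides (F x e.2.2) (F (Function.update x e.1 (x e.1 + v e.1)) e.2.2)
      ((x e.2.2 : ℚ) + (v e.2.2 : ℚ) / 2)}

/-- `c` is an (elementary) circuit of the signed graph with edge set `E`:
a nonempty sequence of consecutive edges, closing up, whose initial
vertices are mutually distinct. -/
def IsCircuit {n : ℕ} (E : Set (SEdge n)) (c : List (SEdge n)) : Prop :=
  c ≠ [] ∧ (∀ e ∈ c, e ∈ E) ∧
  (∀ (k : ℕ) (h : k + 1 < c.length),
    (c.get ⟨k, Nat.lt_of_succ_lt h⟩).2.2 = (c.get ⟨k + 1, h⟩).1) ∧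
  (c.getLast?).map (fun e => e.2.2) = (c.head?).map (fun e => e.1) ∧
  (c.map (fun e => e.1)).Nodup

/-- A positive circuit: a circuit whose product of signs is positive. -/
def IsPosCircuit {n : ℕ} (E : Set (SEdge n)) (c : List (SEdge n)) : Prop :=
  IsCircuit E c ∧ 0 < (c.map (fun e => e.2.1)).prod

/-- The graph `E` has a positive circuit. -/
def HasPosCircuit {n : ℕ} (E : Set (SEdge n)) : Prop := ∃ c, IsPosCircuit E c

/-- Vertex `i` belongs to some positive circuit of `E`. -/
def MemPosCircuit {n : ℕ} (E : Set (SEdge n)) (i : Fin n) : Prop :=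
  ∃ c, IsPosCircuit E c ∧ i ∈ c.map (fun e => e.1)

/-- `I` is a positive feedback vertex set of `E`: every positive circuit
of `E` has at least one vertex in `I`. -/
def IsPFVS {n : ℕ} (E : Set (SEdge n)) (I : Finset (Fin n)) : Prop :=
  ∀ c, IsPosCircuit E c → ∃ i ∈ I, i ∈ c.map (fun e => e.1)

/-- `T_i(G_F)`: the set of real numbers `t` such that `t = x_i + v_i/2` for
some `(x,v) ∈ X'` such that `i` belongs to a positive circuit of `G_F(x,v)`. -/
def Tset {n : ℕ} (a b : Fin n → ℤ) (F : (Fin n → ℤ) → Fin n → ℤ) (i : Fin n) : Set ℝ :=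
  {t | ∃ x v, InX' a b x v ∧ t = (x i : ℝ) + (v i : ℝ) / 2 ∧
    MemPosCircuit (localGraphT F x v) i}

/-- Edge set of the global interaction graph `𝐆(F)` (without thresholds). -/
def globalGraph {n : ℕ} (a b : Fin n → ℤ) (F : (Fin n → ℤ) → Fin n → ℤ) :
    Set (SEdge n) :=
  ⋃ (x : Fin n → ℤ) (v : Fin n → ℤ) (_ : InX' a b x v), localGraph F x v

/-- Edge set of the global interaction graph `G(F)` (with thresholds). -/
def globalGraphT {n : ℕ} (a b : Fin n → ℤ) (F : (Fin n → ℤ) → Fin n → ℤ) :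
    Set (SEdge n) :=
  ⋃ (x : Fin n → ℤ) (v : Fin n → ℤ) (_ : InX' a b x v), localGraphT F x v

/-- Edge relation of the asynchronous state transition graph `Γ(F)`. -/
def Async {n : ℕ} (F : (Fin n → ℤ) → Fin n → ℤ) (x y : Fin n → ℤ) : Prop :=
  ∃ i, F x i ≠ x i ∧ y = Function.update x i (x i + (F x i - x i).sign)

/-- A trap domain of `Γ(F)`: a nonempty subset of `X` closed under the
edges of `Γ(F)`. -/
def IsTrapDomain {n : ℕ} (a b : Fin n → ℤ) (F : (Fin n → ℤ) → Fin n → ℤ)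
    (A : Set (Fin n → ℤ)) : Prop :=
  A.Nonempty ∧ A ⊆ StateSpace a b ∧ ∀ x ∈ A, ∀ y, Async F x y → y ∈ A

/-- An attractor of `Γ(F)`: a trap domain minimal for inclusion. -/
def IsAttractor {n : ℕ} (a b : Fin n → ℤ) (F : (Fin n → ℤ) → Fin n → ℤ)
    (A : Set (Fin n → ℤ)) : Prop :=
  IsTrapDomain a b F A ∧ ∀ B, IsTrapDomain a b F B → B ⊆ A → B = A


/-! Two fixed points `p ≠ q` are compared after composing `F` with the projection onto the box
spanned by `p` and `q`: both stay fixed, and since the projection is monotone the local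
interaction graphs can only lose edges. Let `v` point from `p` towards `q`. If for every
coordinate `j` where `p` and `q` differ, the step `p + vⱼ eⱼ` pushes some such coordinate `k`
strictly towards `q`, these edges `j → k` have sign `vⱼ vₖ` and any cycle among them is a
positive circuit of `𝐆_F(p, v)`. Otherwise some neighbour `γ = p + vⱼ eⱼ` is sent back to `p`;
then `γ` and `q` are fixed by the projection onto their own, smaller box, so `γ = q` by
induction on the distance, and `q` is sent to `p` as well. -/

section Box
variable {ι : Type*}

def boxProj (c d x : ι → ℤ) : ι → ℤ := fun i => max (c i) (min (d i) (x i))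

lemma boxProj_eq_self {c d x : ι → ℤ} (hx : x ∈ Set.Icc c d) : boxProj c d x = x := by
  funext i
  have h₁ : c i ≤ x i := hx.1 i
  have h₂ : x i ≤ d i := hx.2 i
  simp only [boxProj]; omega

lemma boxProj_mem {c d : ι → ℤ} (hcd : c ≤ d) (x : ι → ℤ) : boxProj c d x ∈ Set.Icc c d :=
  ⟨fun _ => le_max_left _ _, fun i => max_le (hcd i) (min_le_left _ _)⟩

lemma boxProj_boxProj {c d c' d' : ι → ℤ} (hc : c ≤ c') (hd : d' ≤ d) (x : ι → ℤ) :
    boxProj c' d' (boxProj c d x) = boxProj c' d' x := by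
  funext i
  have h₁ : c i ≤ c' i := hc i
  have h₂ : d' i ≤ d i := hd i
  simp only [boxProj]; omega

lemma lt_of_boxProj_apply_lt {c d y z : ι → ℤ} {k : ι}
    (h : boxProj c d y k < boxProj c d z k) : y k < z k := by
  simp only [boxProj] at h
  omega

end Box

section Step
variable {ι : Type*} {p q : ι → ℤ}

lemma sign_sub_cases_of_ne {x y : ℤ} (h : x ≠ y) :
    (x < y ∧ (y - x).sign = 1) ∨ (y < x ∧ (y - x).sign = -1) := by
  rcases h.lt_or_gt with h | h
  · exact Or.inl ⟨h, Int.sign_eq_one_of_pos (sub_pos.2 h)⟩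
  · exact Or.inr ⟨h, Int.sign_eq_neg_one_of_neg (sub_neg.2 h)⟩

lemma eq_of_mem_Icc_of_sub_mul_sign_nonpos {y : ι → ℤ} (hy : y ∈ Set.Icc (p ⊓ q) (p ⊔ q))
    (h : ∀ k, p k ≠ q k → (y k - p k) * (q k - p k).sign ≤ 0) : y = p := by
  funext k
  have h₁ : (p ⊓ q) k ≤ y k := hy.1 k
  have h₂ : y k ≤ (p ⊔ q) k := hy.2 k
  simp only [Pi.inf_apply, Pi.sup_apply] at h₁ h₂
  by_cases hk : p k = q k
  · omega
  · have := h k hk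
    rcases sign_sub_cases_of_ne hk with ⟨_, hs⟩ | ⟨_, hs⟩ <;> rw [hs] at this <;> omega

variable [DecidableEq ι] {j : ι}

def stepTowards (p q : ι → ℤ) (j : ι) : ι → ℤ := Function.update p j (p j + (q j - p j).sign)

lemma stepTowards_apply_bounds (hj : p j ≠ q j) (i : ι) :
    min (p i) (q i) ≤ stepTowards p q j i ∧ stepTowards p q j i ≤ max (p i) (q i) ∧
      (stepTowards p q j i - q i).natAbs + (if i = j then 1 else 0) = (p i - q i).natAbs := by
  unfold stepTowards
  rcases eq_or_ne i j with rfl | hi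
  · simp only [Function.update_self, if_pos]
    rcases sign_sub_cases_of_ne hj with ⟨_, h⟩ | ⟨_, h⟩ <;> omega
  · simp only [Function.update_of_ne hi, if_neg hi]
    omega

lemma stepTowards_mem_Icc (hj : p j ≠ q j) : stepTowards p q j ∈ Set.Icc (p ⊓ q) (p ⊔ q) :=
  ⟨fun i => (stepTowards_apply_bounds hj i).1, fun i => (stepTowards_apply_bounds hj i).2.1⟩

lemma boxProj_stepTowards (hj : p j ≠ q j) :
    boxProj (stepTowards p q j ⊓ q) (stepTowards p q j ⊔ q) p = stepTowards p q j := by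
  funext i
  have := stepTowards_apply_bounds hj i
  simp only [boxProj, Pi.inf_apply, Pi.sup_apply]
  split_ifs at this <;> omega

lemma sum_natAbs_stepTowards_lt [Fintype ι] (hj : p j ≠ q j) :
    ∑ i, (stepTowards p q j i - q i).natAbs < ∑ i, (p i - q i).natAbs := by
  refine Finset.sum_lt_sum (fun i _ => ?_) ⟨j, Finset.mem_univ j, ?_⟩
  · have := (stepTowards_apply_bounds hj i).2.2
    split_ifs at this <;> omega
  · have := (stepTowards_apply_bounds hj j).2.2
    simp only [if_pos] at this
    omega

end Step

open Function in
lemma Finite.exists_iterate_mem_periodicPts {α : Type*} [Finite α] (f : α → α) (x : α) :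
    ∃ k, f^[k] x ∈ periodicPts f := by
  obtain ⟨k, l, hkl, heq⟩ := Finite.exists_ne_map_eq_of_infinite fun m : ℕ => f^[m] x
  wlog hlt : k < l generalizing k l
  · exact this l k hkl.symm heq.symm (by omega)
  refine ⟨k, l - k, by omega, ?_⟩
  change f^[l - k] (f^[k] x) = f^[k] x
  rw [← iterate_add_apply, Nat.sub_add_cancel hlt.le, heq]

section Circuit
open Function
variable {n : ℕ} (E : Set (SEdge n)) {v : Fin n → ℤ}

lemma hasPosCircuit_of_mem_periodicPts (hv : ∀ i, v i ≠ 0) {f : Fin n → Fin n} {x : Fin n}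
    (hx : x ∈ periodicPts f)
    (hE : ∀ k, (f^[k] x, v (f^[k] x) * v (f^[k + 1] x), f^[k + 1] x) ∈ E) : HasPosCircuit E := by
  set r := minimalPeriod f x
  have hr : 0 < r := minimalPeriod_pos_of_mem_periodicPts hx
  set w : ℕ → ℤ := fun k => v (f^[k] x)
  refine ⟨(List.range r).map fun k => (f^[k] x, w k * w (k + 1), f^[k + 1] x),
    ⟨⟨?_, ?_, ?_, ?_, ?_⟩, ?_⟩⟩
  · simpa using hr.ne'
  · simp only [List.mem_map, List.mem_range]
    rintro _ ⟨k, -, rfl⟩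
    exact hE k
  · intro k hk
    simp
  · simp only [List.getLast?_map, List.head?_map, List.getLast?_range, List.head?_range,
      if_neg hr.ne', Option.map_some, Nat.sub_add_cancel hr, iterate_zero_apply]
    rw [iterate_minimalPeriod]
  · rw [List.map_map]
    exact List.nodup_range.map_on fun k hk l hl hkl =>
      iterate_injOn_Iio_minimalPeriod (List.mem_range.1 hk) (List.mem_range.1 hl) hkl
  · have hw : w r = w 0 := by simp only [w, r, iterate_minimalPeriod, iterate_zero_apply]
    have hshift : ((List.range r).map fun k => w (k + 1)).prod = ((List.range r).map w).prod := by
      have h := List.prod_range_succ w r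
      rw [List.prod_range_succ', hw, mul_comm] at h
      exact mul_right_cancel₀ (hv _) h
    rw [List.map_map, Function.comp_def, List.prod_map_mul, hshift]
    exact mul_self_pos.2 (List.prod_ne_zero (by simp [w, hv]))

lemma hasPosCircuit_of_forall_exists_edge (hv : ∀ i, v i ≠ 0) {D : Set (Fin n)}
    (hD : D.Nonempty) (hstep : ∀ j ∈ D, ∃ i ∈ D, (j, v j * v i, i) ∈ E) : HasPosCircuit E := by
  obtain ⟨j₀, hj₀⟩ := hD
  have : Nonempty (Fin n) := ⟨j₀⟩
  choose! f hfD hfE using hstep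
  obtain ⟨k, hk⟩ := Finite.exists_iterate_mem_periodicPts f j₀
  refine hasPosCircuit_of_mem_periodicPts E hv hk fun m => ?_
  rw [iterate_succ_apply']
  have hf : Set.MapsTo f D D := hfD
  exact hfE _ (hf.iterate m (hf.iterate k hj₀))

end Circuit

section FixedPoints
variable {n : ℕ} {a b : Fin n → ℤ} {F : (Fin n → ℤ) → Fin n → ℤ}

lemma stateSpace_eq_Icc (a b : Fin n → ℤ) : StateSpace a b = Set.Icc a b :=
  Set.ext fun _ => ⟨fun h => ⟨fun i => (h i).1, fun i => (h i).2⟩, fun h i => ⟨h.1 i, h.2 i⟩⟩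

lemma IsDir.ne_zero {v : Fin n → ℤ} (hv : IsDir v) (i : Fin n) : v i ≠ 0 := by
  rcases hv i with h | h <;> simp [h]

lemma jac_eq_mul {x v : Fin n → ℤ} {i j : Fin n} (hv : v j = 1 ∨ v j = -1) :
    jac F x v i j = (F (Function.update x j (x j + v j)) i - F x i) * v j := by
  unfold jac
  rcases hv with h | h <;> rw [h] <;> simp

lemma mem_localGraph_of_boxProj {c d x v : Fin n → ℤ} {j k : Fin n}
    (hx : boxProj c d (F x) = x) (hvj : v j = 1 ∨ v j = -1) (hvk : v k = 1 ∨ v k = -1)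
    (h : 0 < (boxProj c d (F (Function.update x j (x j + v j))) k - x k) * v k) :
    (j, v j * v k, k) ∈ localGraph F x v := by
  have hxk : x k = boxProj c d (F x) k := by rw [hx]
  rw [localGraph, Set.mem_ofPred_eq, jac_eq_mul hvj]
  set y := Function.update x j (x j + v j)
  clear_value y
  rw [hxk] at h
  have hF : (v k = 1 ∧ F x k < F y k) ∨ (v k = -1 ∧ F y k < F x k) := by
    rcases hvk with h2 | h2 <;> rw [h2] at h
    · exact Or.inl ⟨h2, lt_of_boxProj_apply_lt (by linarith)⟩
    · exact Or.inr ⟨h2, lt_of_boxProj_apply_lt (by linarith)⟩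
  rcases hvj with h1 | h1 <;> rcases hF with ⟨h2, h3⟩ | ⟨h2, h3⟩ <;> simp only [h1, h2] <;> omega

/-- The unit direction from `p` towards `q`; where `p` and `q` agree, any unit step that stays
in `[a, b]` when `a + 1 ≤ b`. -/
def towards (b p q : Fin n → ℤ) : Fin n → ℤ :=
  fun i => if p i = q i then (if p i < b i then 1 else -1) else (q i - p i).sign

lemma towards_of_ne {p q : Fin n → ℤ} {i : Fin n} (h : p i ≠ q i) :
    towards b p q i = (q i - p i).sign :=
  if_neg h

lemma isDir_towards (b p q : Fin n → ℤ) : IsDir (towards b p q) := by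
  intro i
  unfold towards
  split_ifs with h₁ h₂
  · exact Or.inl rfl
  · exact Or.inr rfl
  · rcases sign_sub_cases_of_ne h₁ with ⟨_, h⟩ | ⟨_, h⟩ <;> simp [h]

lemma inX'_towards (hab : ∀ i, a i + 1 ≤ b i) {p q : Fin n → ℤ} (hp : p ∈ Set.Icc a b)
    (hq : q ∈ Set.Icc a b) : InX' a b p (towards b p q) := by
  rw [InX', stateSpace_eq_Icc]
  refine ⟨hp, isDir_towards b p q, fun i => ?_, fun i => ?_⟩ <;>
  · have := hab i; have : a i ≤ p i := hp.1 i; have : p i ≤ b i := hp.2 i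
    have : a i ≤ q i := hq.1 i; have : q i ≤ b i := hq.2 i
    simp only [towards, Pi.add_apply]
    split_ifs with h₁ h₂
    all_goals first | omega | rcases sign_sub_cases_of_ne h₁ with ⟨_, h⟩ | ⟨_, h⟩ <;> omega

theorem eq_of_boxProj_inf_sup_fixed (hab : ∀ i, a i + 1 ≤ b i)
    (h : ∀ x v, InX' a b x v → ¬ HasPosCircuit (localGraph F x v)) {p q : Fin n → ℤ}
    (hp : p ∈ Set.Icc a b) (hq : q ∈ Set.Icc a b)
    (hFp : boxProj (p ⊓ q) (p ⊔ q) (F p) = p) (hFq : boxProj (p ⊓ q) (p ⊔ q) (F q) = q) :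
    p = q := by
  by_contra hpq
  set v := towards b p q with hv_def
  have hv : IsDir v := isDir_towards b p q
  by_cases hcirc : ∀ j, p j ≠ q j → ∃ k, p k ≠ q k ∧
      0 < (boxProj (p ⊓ q) (p ⊔ q) (F (Function.update p j (p j + v j))) k - p k) * v k
  · refine h p v (inX'_towards hab hp hq) (hasPosCircuit_of_forall_exists_edge _ hv.ne_zero
      (Function.ne_iff.1 hpq) fun j hj => ?_)
    obtain ⟨k, hk, hpos⟩ := hcirc j hj
    exact ⟨k, hk, mem_localGraph_of_boxProj hFp (hv j) (hv k) hpos⟩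
  · push Not at hcirc
    obtain ⟨j, hj, hstuck⟩ := hcirc
    rw [hv_def, towards_of_ne hj] at hstuck
    set γ := stepTowards p q j
    have hγ : γ ∈ Set.Icc (p ⊓ q) (p ⊔ q) := stepTowards_mem_Icc hj
    have hFγ : boxProj (p ⊓ q) (p ⊔ q) (F γ) = p :=
      eq_of_mem_Icc_of_sub_mul_sign_nonpos (boxProj_mem inf_le_sup _) fun k hk =>
        towards_of_ne (b := b) hk ▸ hstuck k hk
    have hinf : p ⊓ q ≤ γ ⊓ q := le_inf hγ.1 inf_le_right
    have hsup : γ ⊔ q ≤ p ⊔ q := sup_le hγ.2 le_sup_right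
    have hγq : γ = q := eq_of_boxProj_inf_sup_fixed hab h
      (Set.Icc_subset_Icc (le_inf hp.1 hq.1) (sup_le hp.2 hq.2) hγ) hq
      (by rw [← boxProj_boxProj hinf hsup, hFγ, boxProj_stepTowards hj])
      (by rw [← boxProj_boxProj hinf hsup, hFq]; exact boxProj_eq_self ⟨inf_le_right, le_sup_right⟩)
    exact hpq (by rw [← hFγ, hγq, hFq])
termination_by ∑ i, (p i - q i).natAbs
decreasing_by exact sum_natAbs_stepTowards_lt hj

end FixedPoints

theorem stmt1_general {n : ℕ} (a b : Fin n → ℤ) (hab : ∀ i, a i + 1 ≤ b i)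
    (F : (Fin n → ℤ) → Fin n → ℤ)
    (h : ∀ x v, InX' a b x v → ¬ HasPosCircuit (localGraph F x v)) :
    ∀ x ∈ StateSpace a b, ∀ y ∈ StateSpace a b, F x = x → F y = y → x = y := by
  rw [stateSpace_eq_Icc]
  intro x hx y hy hFx hFy
  refine eq_of_boxProj_inf_sup_fixed hab h hx hy ?_ ?_
  · rw [hFx]; exact boxProj_eq_self ⟨inf_le_left, le_sup_left⟩
  · rw [hFy]; exact boxProj_eq_self ⟨inf_le_right, le_sup_right⟩

/-- If no local interaction graph `𝐆_F(x,v)` has a positive circuit, then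
`F` has at most one fixed point. -/
theorem stmt1 {n : ℕ} (a b : Fin n → ℤ) (hab : ∀ i, a i + 1 ≤ b i)
    (F : (Fin n → ℤ) → Fin n → ℤ)
    (hF : ∀ x ∈ StateSpace a b, F x ∈ StateSpace a b)
    (h : ∀ x v, InX' a b x v → ¬ HasPosCircuit (localGraph F x v)) :
    ∀ x ∈ StateSpace a b, ∀ y ∈ StateSpace a b, F x = x → F y = y → x = y :=
  stmt1_general a b hab F h
end

section
/- Let X = ∏_{i=1}^n X_i be a product of n finite intervals of integers, each of cardinality at least 2, let F = (f_1,…,f_n) be a map from X to itself, and let Y be a subinterval of X_1 such that every t ∈ T_1(G_F) satisfies t < min(Y) or max(Y) < t. Define F̃ = (f̃_1,…,f̃_n) : X → X by f̃_i = f_i for i > 1 and f̃_1(x) = min(Y) if f_1(x) < min(Y), f̃_1(x) = f_1(x) if f_1(x) ∈ Y, and f̃_1(x) = max(Y) if f_1(x) > max(Y). Then for every (x,v) ∈ X', vertex 1 belongs to no positive circuit of the local interaction graph with thresholds G_{F̃}(x,v). -/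
/-- The map `F̃` obtained from `F` by clamping the first component into
the subinterval `Y = [c, d]` of `X_1`. -/
def clampFirst {n : ℕ} (i0 : Fin n) (c d : ℤ) (F : (Fin n → ℤ) → Fin n → ℤ) :
    (Fin n → ℤ) → Fin n → ℤ :=
  fun x i => if i = i0 then
      (if F x i0 < c then c else if d < F x i0 then d else F x i0)
    else F x i

/-! Clamping `f_1` into `Y = [c, d]` never creates a threshold crossing at vertex `1`, and it
keeps the direction of each crossing it leaves, so every edge of `G_{F̃}(x,v)` is an edge of
`G_F(x,v)`. A positive circuit of `G_{F̃}(x,v)` through `1` is thus one of `G_F(x,v)`, which puts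
`t = x_1 + v_1/2` in `T_1(G_F)`. But the edge of that circuit entering `1` makes `f̃_1`, whose
values lie in `Y`, cross `t`, so `min Y < t < max Y`. -/

theorem lt_and_lt_of_max_min_lt_lt {α : Type*} [LinearOrder α] {c d p q t : α} (hp : max c (min d p) < t)
    (hq : t < max c (min d q)) : p < t ∧ t < q := by
  simp only [max_lt_iff, min_lt_iff, lt_max_iff, lt_min_iff] at hp hq
  rcases hp with ⟨hct, hdt | hpt⟩ <;> rcases hq with htc | ⟨htd, htq⟩
  all_goals first
    | exact absurd (hct.trans htc) (lt_irrefl c)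
    | exact absurd (hdt.trans htd) (lt_irrefl d)
    | exact ⟨hpt, htq⟩

theorem BothSides.mem_Ioo {p q t c d : ℚ} (h : BothSides p q t) (hp : p ∈ Set.Icc c d)
    (hq : q ∈ Set.Icc c d) : t ∈ Set.Ioo c d := by
  obtain ⟨hcp, hpd⟩ := hp
  obtain ⟨hcq, hqd⟩ := hq
  rcases h with ⟨hpt, htq⟩ | ⟨hqt, htp⟩
  · exact ⟨hcp.trans_lt hpt, htq.trans_le hqd⟩
  · exact ⟨hcq.trans_lt hqt, htp.trans_le hpd⟩

theorem BothSides.of_max_min {c d p q : ℤ} {t : ℚ}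
    (h : BothSides (max c (min d p) : ℤ) (max c (min d q) : ℤ) t) :
    BothSides p q t ∧ (max c (min d q) - max c (min d p)).sign = (q - p).sign := by
  push_cast at h
  rcases h with ⟨hp, hq⟩ | ⟨hq, hp⟩
  · obtain ⟨hpt, htq⟩ := lt_and_lt_of_max_min_lt_lt hp hq
    have hpq : p < q := by exact_mod_cast hpt.trans htq
    have hPQ : max c (min d p) < max c (min d q) := by exact_mod_cast hp.trans hq
    refine ⟨Or.inl ⟨hpt, htq⟩, ?_⟩
    rw [Int.sign_eq_one_of_pos (sub_pos.2 hPQ), Int.sign_eq_one_of_pos (sub_pos.2 hpq)]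
  · obtain ⟨hqt, htp⟩ := lt_and_lt_of_max_min_lt_lt hq hp
    have hqp : q < p := by exact_mod_cast hqt.trans htp
    have hQP : max c (min d q) < max c (min d p) := by exact_mod_cast hq.trans hp
    refine ⟨Or.inr ⟨hqt, htp⟩, ?_⟩
    rw [Int.sign_eq_neg_one_of_neg (sub_neg.2 hQP), Int.sign_eq_neg_one_of_neg (sub_neg.2 hqp)]

theorem Int.sign_ediv_of_isUnit {A w : ℤ} (hw : IsUnit w) : (A / w).sign = A.sign * w := by
  rcases Int.isUnit_iff.1 hw with rfl | rfl <;> simp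

theorem sign_jac {n : ℕ} (F : (Fin n → ℤ) → Fin n → ℤ) {x v : Fin n → ℤ} (hv : IsDir v)
    (i j : Fin n) :
    (jac F x v i j).sign = (F (Function.update x j (x j + v j)) i - F x i).sign * v j :=
  Int.sign_ediv_of_isUnit (Int.isUnit_iff.2 (hv j))

theorem mem_localGraph_of_sign_jac_eq {n : ℕ} {F G : (Fin n → ℤ) → Fin n → ℤ}
    {x v : Fin n → ℤ} {e : SEdge n}
    (h : (jac G x v e.2.2 e.1).sign = (jac F x v e.2.2 e.1).sign)
    (he : e ∈ localGraph G x v) : e ∈ localGraph F x v := by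
  simp only [localGraph, Set.mem_ofPred_eq, ← Int.sign_eq_one_iff_pos,
    ← Int.sign_eq_neg_one_iff_neg, h] at he ⊢
  exact he

theorem mem_localGraphT_of_crossing {n : ℕ} {F G : (Fin n → ℤ) → Fin n → ℤ}
    {x v : Fin n → ℤ} (hv : IsDir v) {e : SEdge n}
    (hcross : let x' := Function.update x e.1 (x e.1 + v e.1)
      BothSides (G x e.2.2) (G x' e.2.2) ((x e.2.2 : ℚ) + (v e.2.2 : ℚ) / 2) →
      BothSides (F x e.2.2) (F x' e.2.2) ((x e.2.2 : ℚ) + (v e.2.2 : ℚ) / 2) ∧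
        (G x' e.2.2 - G x e.2.2).sign = (F x' e.2.2 - F x e.2.2).sign)
    (he : e ∈ localGraphT G x v) : e ∈ localGraphT F x v := by
  obtain ⟨hg, hbs⟩ := he
  obtain ⟨hbs', hsign⟩ := hcross hbs
  refine ⟨mem_localGraph_of_sign_jac_eq ?_ hg, hbs'⟩
  rw [sign_jac G hv, sign_jac F hv, hsign]

section ClampFirst

variable {n : ℕ} (i0 : Fin n) {c d : ℤ} (F : (Fin n → ℤ) → Fin n → ℤ)

theorem clampFirst_apply_self (hcd : c ≤ d) (y : Fin n → ℤ) :
    clampFirst i0 c d F y i0 = max c (min d (F y i0)) := by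
  simp only [clampFirst]
  split_ifs <;> omega

theorem clampFirst_apply_of_ne {i : Fin n} (hi : i ≠ i0) (y : Fin n → ℤ) :
    clampFirst i0 c d F y i = F y i := by
  simp only [clampFirst, if_neg hi]

theorem clampFirst_apply_self_mem_Icc (hcd : c ≤ d) (y : Fin n → ℤ) :
    (clampFirst i0 c d F y i0 : ℚ) ∈ Set.Icc (c : ℚ) d := by
  rw [clampFirst_apply_self i0 F hcd]
  exact ⟨by exact_mod_cast le_max_left _ _,
    by exact_mod_cast max_le hcd (min_le_left _ _)⟩

theorem localGraphT_clampFirst_subset (hcd : c ≤ d) {x v : Fin n → ℤ} (hv : IsDir v) :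
    localGraphT (clampFirst i0 c d F) x v ⊆ localGraphT F x v := by
  intro e he
  refine mem_localGraphT_of_crossing hv (fun hbs => ?_) he
  by_cases hi : e.2.2 = i0
  · rw [hi, clampFirst_apply_self i0 F hcd, clampFirst_apply_self i0 F hcd] at hbs ⊢
    exact hbs.of_max_min
  · rw [clampFirst_apply_of_ne i0 F hi, clampFirst_apply_of_ne i0 F hi] at hbs ⊢
    exact ⟨hbs, rfl⟩

end ClampFirst

theorem IsPosCircuit.mono {n : ℕ} {E E' : Set (SEdge n)} (hE : E ⊆ E') {C : List (SEdge n)}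
    (h : IsPosCircuit E C) : IsPosCircuit E' C := by
  obtain ⟨⟨hne, hmem, hcons, hclose, hnd⟩, hpos⟩ := h
  exact ⟨⟨hne, fun e he => hE (hmem e he), hcons, hclose, hnd⟩, hpos⟩

theorem MemPosCircuit.mono {n : ℕ} {E E' : Set (SEdge n)} (hE : E ⊆ E') {i : Fin n}
    (h : MemPosCircuit E i) : MemPosCircuit E' i :=
  let ⟨C, hC, hi⟩ := h
  ⟨C, hC.mono hE, hi⟩

theorem IsCircuit.exists_mem_snd_snd_eq {n : ℕ} {E : Set (SEdge n)} {C : List (SEdge n)}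
    (h : IsCircuit E C) {i : Fin n} (hi : i ∈ C.map (fun e => e.1)) :
    ∃ e ∈ C, e.2.2 = i := by
  obtain ⟨hne, -, hcons, hclose, -⟩ := h
  obtain ⟨e', he', rfl⟩ := List.mem_map.mp hi
  obtain ⟨⟨k, hk⟩, rfl⟩ := List.mem_iff_get.mp he'
  match k with
  | 0 =>
    refine ⟨C.getLast hne, List.getLast_mem hne, ?_⟩
    rw [List.getLast?_eq_some_getLast hne, List.head?_eq_some_head hne] at hclose
    simpa [List.head_eq_getElem] using hclose
  | k + 1 => exact ⟨C.get ⟨k, Nat.lt_of_succ_lt hk⟩, List.get_mem C _, hcons k hk⟩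

theorem threshold_mem_Ioo_of_memPosCircuit_clampFirst {n : ℕ} {i0 : Fin n} {c d : ℤ}
    (hcd : c ≤ d) {F : (Fin n → ℤ) → Fin n → ℤ} {x v : Fin n → ℤ}
    (h : MemPosCircuit (localGraphT (clampFirst i0 c d F) x v) i0) :
    (x i0 : ℚ) + (v i0 : ℚ) / 2 ∈ Set.Ioo (c : ℚ) d := by
  obtain ⟨C, ⟨hC, -⟩, hi⟩ := h
  obtain ⟨e, heC, rfl⟩ := hC.exists_mem_snd_snd_eq hi
  exact (hC.2.1 e heC).2.mem_Ioo (clampFirst_apply_self_mem_Icc _ _ hcd _)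
    (clampFirst_apply_self_mem_Icc _ _ hcd _)

theorem stmt15_general {n : ℕ} (hn : 0 < n) (a b : Fin n → ℤ)
    (F : (Fin n → ℤ) → Fin n → ℤ)
    (c d : ℤ) (hcd : c ≤ d)
    (hT : ∀ t ∈ Tset a b F ⟨0, hn⟩, t < (c : ℝ) ∨ (d : ℝ) < t) :
    ∀ x v, InX' a b x v →
      ¬ MemPosCircuit (localGraphT (clampFirst ⟨0, hn⟩ c d F) x v) ⟨0, hn⟩ := by
  intro x v hxv hmem
  have hmemT : (x ⟨0, hn⟩ : ℝ) + (v ⟨0, hn⟩ : ℝ) / 2 ∈ Tset a b F ⟨0, hn⟩ :=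
    ⟨x, v, hxv, rfl, hmem.mono (localGraphT_clampFirst_subset _ F hcd hxv.2.1)⟩
  obtain ⟨hct, htd⟩ := threshold_mem_Ioo_of_memPosCircuit_clampFirst hcd hmem
  have hct' := (Rat.cast_lt (K := ℝ)).2 hct
  have htd' := (Rat.cast_lt (K := ℝ)).2 htd
  push_cast at hct' htd'
  rcases hT _ hmemT with h | h <;> linarith

/-- If every `t ∈ T_1(G_F)` satisfies `t < min Y` or `max Y < t`, then
vertex `1` belongs to no positive circuit of any `G_{F̃}(x,v)`. -/
theorem stmt15 {n : ℕ} (hn : 0 < n) (a b : Fin n → ℤ) (hab : ∀ i, a i + 1 ≤ b i)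
    (F : (Fin n → ℤ) → Fin n → ℤ)
    (hF : ∀ x ∈ StateSpace a b, F x ∈ StateSpace a b)
    (c d : ℤ) (hc : a ⟨0, hn⟩ ≤ c) (hcd : c ≤ d) (hd : d ≤ b ⟨0, hn⟩)
    (hT : ∀ t ∈ Tset a b F ⟨0, hn⟩, t < (c : ℝ) ∨ (d : ℝ) < t) :
    ∀ x v, InX' a b x v →
      ¬ MemPosCircuit (localGraphT (clampFirst ⟨0, hn⟩ c d F) x v) ⟨0, hn⟩ :=
  stmt15_general hn a b F c d hcd hT
end
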